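/- arXiv:2202.05069 — 3 statements merged into one kernel-verified Lean document; each statement's English description precedes it below -/
import Mathlib

section
/- Let σ, σ_S > 0. Then the matrix H = σ² Σ_T⁻¹ − ((1/σ_S²) 𝕀 Σ_S 𝕀ᵀ + (1/σ²) Σ_T)⁻¹ is positive semidefinite; equivalently, x H xᵀ ≥ 0 for every row vector x ∈ ℝ^{d_T}. (This is the key matrix inequality of Theorem 1: with weights α_S = 1/σ_S² and α_T = 1/σ², the difference Var(θ̂_T) − Var(θ̂_α) between the variance of the basic ordinary-least-squares estimator and that of the data-pooling estimator equals H, so the transfer gain G(x) = x H xᵀ is non-negative for every x.) -/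
/-!
With `A = σ_S⁻² 𝕀 Σ_S 𝕀ᵀ ⪰ 0` and `B = σ⁻² Σ_T ≻ 0` we have `H = B⁻¹ - (A + B)⁻¹`, and
conjugating by `A + B` gives `(A + B) H (A + B) = A B⁻¹ A + A ⪰ 0`. Since `A + B` is invertible,
`H ⪰ 0`: matrix inversion is antitone in the Loewner order.
-/

open Matrix

noncomputable section

/-- The `d_T × d_S` matrix `𝕀` with `𝕀 i i = 1` and `𝕀 i j = 0` for `i ≠ j`. -/
def emb (dS dT : ℕ) : Matrix (Fin dT) (Fin dS) ℝ :=
  Matrix.of fun i j => if (i : ℕ) = (j : ℕ) then 1 else 0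

namespace Matrix

variable {n : Type*} [Fintype n] [DecidableEq n]

theorem add_mul_inv_sub_inv_add_mul_add {α : Type*} [CommRing α] {A B : Matrix n n α}
    (hB : IsUnit B) (hAB : IsUnit (A + B)) :
    (A + B) * (B⁻¹ - (A + B)⁻¹) * (A + B) = A * B⁻¹ * A + A := by
  have hBdet : IsUnit B.det := (isUnit_iff_isUnit_det B).mp hB
  rw [Matrix.mul_sub, mul_nonsing_inv _ ((isUnit_iff_isUnit_det _).mp hAB), Matrix.sub_mul,
    Matrix.one_mul]
  simp only [Matrix.add_mul, Matrix.mul_add, mul_nonsing_inv _ hBdet, Matrix.one_mul,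
    nonsing_inv_mul_cancel_right _ _ hBdet]
  abel

theorem PosSemidef.inv_sub_inv_add {K : Type*} [Field K] [PartialOrder K] [StarRing K]
    [AddLeftMono K] {A B : Matrix n n K} (hA : A.PosSemidef) (hB : B.PosDef) :
    (B⁻¹ - (A + B)⁻¹).PosSemidef := by
  have hAB : (A + B).PosDef := PosDef.posSemidef_add hA hB
  rw [← hAB.isUnit.posSemidef_star_left_conjugate_iff, star_eq_conjTranspose,
    hAB.isHermitian.eq, add_mul_inv_sub_inv_add_mul_add hB.isUnit hAB.isUnit]
  have hABA : (Aᴴ * B⁻¹ * A).PosSemidef := hB.inv.posSemidef.conjTranspose_mul_mul_same A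
  rw [hA.isHermitian.eq] at hABA
  exact hABA.add hA

end Matrix

theorem stmt11_general (dS dT nS nT : ℕ)
    (xS : Matrix (Fin nS) (Fin dS) ℝ) (xT : Matrix (Fin nT) (Fin dT) ℝ)
    (hxT : Function.Injective xT.mulVec)
    (σ σS : ℝ) (hσ : 0 < σ) :
    let SigS := xSᵀ * xS
    let SigT := xTᵀ * xT
    let H := σ ^ 2 • SigT⁻¹ -
      ((σS ^ 2)⁻¹ • (emb dS dT * SigS * (emb dS dT)ᵀ) + (σ ^ 2)⁻¹ • SigT)⁻¹
    H.PosSemidef ∧ ∀ x : Fin dT → ℝ, 0 ≤ x ⬝ᵥ H.mulVec x := by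
  intro SigS SigT H
  have hSigT : SigT.PosDef := by
    simpa only [conjTranspose_eq_transpose_of_trivial] using PosDef.conjTranspose_mul_self xT hxT
  have hA : ((σS ^ 2)⁻¹ • (emb dS dT * SigS * (emb dS dT)ᵀ)).PosSemidef := by
    refine PosSemidef.smul ?_ (by positivity)
    simpa only [conjTranspose_eq_transpose_of_trivial] using
      (posSemidef_conjTranspose_mul_self xS).mul_mul_conjTranspose_same (emb dS dT)
  have hB : ((σ ^ 2)⁻¹ • SigT).PosDef := hSigT.smul (by positivity)
  have hBinv : ((σ ^ 2)⁻¹ • SigT)⁻¹ = σ ^ 2 • SigT⁻¹ := inv_eq_left_inv <| by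
    rw [smul_mul_smul_comm, mul_inv_cancel₀ (by positivity), one_smul,
      nonsing_inv_mul _ ((isUnit_iff_isUnit_det _).mp hSigT.isUnit)]
  have hH : H.PosSemidef := by
    simpa only [H, hBinv] using hA.inv_sub_inv_add hB
  exact ⟨hH, fun x => by simpa only [star_trivial] using hH.dotProduct_mulVec_nonneg x⟩

/-- Key matrix inequality of Theorem 1: with weights `α_S = 1/σ_S²`, `α_T = 1/σ²`,
the matrix `H = σ² Σ_T⁻¹ − ((1/σ_S²) 𝕀 Σ_S 𝕀ᵀ + (1/σ²) Σ_T)⁻¹` is positive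
semidefinite; equivalently `x H xᵀ ≥ 0` for every row vector `x`. -/
theorem stmt11 (dS dT nS nT : ℕ) (hd : dS < dT)
    (xS : Matrix (Fin nS) (Fin dS) ℝ) (xT : Matrix (Fin nT) (Fin dT) ℝ)
    (hxS : Function.Injective xS.mulVec)
    (hxT : Function.Injective xT.mulVec)
    (σ σS : ℝ) (hσ : 0 < σ) (hσS : 0 < σS) :
    let SigS := xSᵀ * xS
    let SigT := xTᵀ * xT
    let H := σ ^ 2 • SigT⁻¹ -
      ((σS ^ 2)⁻¹ • (emb dS dT * SigS * (emb dS dT)ᵀ) + (σ ^ 2)⁻¹ • SigT)⁻¹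
    H.PosSemidef ∧ ∀ x : Fin dT → ℝ, 0 ≤ x ⬝ᵥ H.mulVec x :=
  stmt11_general dS dT nS nT xS xT hxT σ σS hσ
end
end

section
/- Let θ ∈ ℝ^{d_T}, let x ∈ ℝ^{d_T} be a fixed row vector, and let Y = x·θ + w where w is square-integrable with 𝔼[w] = 0 and Var(w) = σ². Let θ̂_T and θ̂_α be square-integrable random vectors, each independent of w, both unbiased for θ, with covariance matrices Var(θ̂_T) = σ² Σ_T⁻¹ and Var(θ̂_α) = ((1/σ_S²) 𝕀 Σ_S 𝕀ᵀ + (1/σ²) Σ_T)⁻¹, where σ, σ_S > 0. Then the generalization error of θ̂_α is bounded by that of θ̂_T: 𝔼[(Y − x·θ̂_α)²] ≤ 𝔼[(Y − x·θ̂_T)²]. -/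
open Matrix MeasureTheory ProbabilityTheory

noncomputable section

/-! Since `θ̂` is unbiased and independent of the centred noise `w`, the residual
`Y - x·θ̂ = w + x·(θ - θ̂)` has mean zero, so its second moment is its variance
`Var w + xᵀ Var(θ̂) x`. The claim therefore reduces to the Loewner-order inequality
`(A + B)⁻¹ ≤ B⁻¹` for `A = σ_S⁻² 𝕀 Σ_S 𝕀ᵀ ⪰ 0` and `B = σ⁻² Σ_T ≻ 0`, since `σ² Σ_T⁻¹ = B⁻¹`. -/

namespace Matrix

variable {n : Type*} [Fintype n]

lemma dotProduct_mulVec_comm_of_isHermitian {M : Matrix n n ℝ} (hM : M.IsHermitian)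
    (u v : n → ℝ) : u ⬝ᵥ M *ᵥ v = v ⬝ᵥ M *ᵥ u := by
  rw [dotProduct_mulVec, ← mulVec_transpose, ← conjTranspose_eq_transpose_of_trivial, hM.eq,
    dotProduct_comm]

lemma PosDef.mulVec_inv_mulVec [DecidableEq n] {M : Matrix n n ℝ} (hM : M.PosDef) (x : n → ℝ) :
    M *ᵥ M⁻¹ *ᵥ x = x := by
  rw [mulVec_mulVec, mul_nonsing_inv _ ((isUnit_iff_isUnit_det M).mp hM.isUnit), one_mulVec]

lemma dotProduct_inv_add_mulVec_le [DecidableEq n] {A B : Matrix n n ℝ} (hA : A.PosSemidef)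
    (hB : B.PosDef) (x : n → ℝ) : x ⬝ᵥ (A + B)⁻¹ *ᵥ x ≤ x ⬝ᵥ B⁻¹ *ᵥ x := by
  set y := (A + B)⁻¹ *ᵥ x
  set z := B⁻¹ *ᵥ x
  have hy : (A + B) *ᵥ y = x := (PosDef.posSemidef_add hA hB).mulVec_inv_mulVec x
  have hz : B *ᵥ z = x := hB.mulVec_inv_mulVec x
  have hBsymm := dotProduct_mulVec_comm_of_isHermitian hB.isHermitian
  -- Expanding `(z - y)ᵀ B (z - y) ≥ 0` gives `x ⬝ᵥ z - x ⬝ᵥ y ≥ yᵀ A y ≥ 0`.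
  have hxy : x ⬝ᵥ y = y ⬝ᵥ A *ᵥ y + y ⬝ᵥ B *ᵥ y := by
    rw [← hy, dotProduct_comm, add_mulVec, dotProduct_add]
  have hxy' : x ⬝ᵥ y = z ⬝ᵥ B *ᵥ y := by rw [← hz, dotProduct_comm, hBsymm]
  have hxz : x ⬝ᵥ z = z ⬝ᵥ B *ᵥ z := by rw [← hz, dotProduct_comm]
  have hexpand : (z - y) ⬝ᵥ B *ᵥ (z - y) = z ⬝ᵥ B *ᵥ z - 2 * (z ⬝ᵥ B *ᵥ y) + y ⬝ᵥ B *ᵥ y := by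
    rw [mulVec_sub, sub_dotProduct, dotProduct_sub, dotProduct_sub, hBsymm y z]
    ring
  have hAy : 0 ≤ y ⬝ᵥ A *ᵥ y := by simpa using hA.dotProduct_mulVec_nonneg y
  have hBzy : 0 ≤ (z - y) ⬝ᵥ B *ᵥ (z - y) := by
    simpa using hB.posSemidef.dotProduct_mulVec_nonneg (z - y)
  linarith

end Matrix

namespace ProbabilityTheory

variable {Ω ι : Type*} [MeasurableSpace Ω] {μ : Measure Ω} [Fintype ι]

def covMatrix (X : Ω → ι → ℝ) (μ : Measure Ω) : Matrix ι ι ℝ :=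
  Matrix.of fun i j => cov[fun ω => X ω i, fun ω => X ω j; μ]

lemma memLp_dotProduct {X : Ω → ι → ℝ}
    (hX : ∀ i, MemLp (fun ω => X ω i) 2 μ) (x : ι → ℝ) : MemLp (fun ω => x ⬝ᵥ X ω) 2 μ :=
  memLp_finsetSum _ fun i _ => (hX i).const_mul (x i)

lemma integral_dotProduct {X : Ω → ι → ℝ} (hX : ∀ i, Integrable (fun ω => X ω i) μ)
    (x : ι → ℝ) : ∫ ω, x ⬝ᵥ X ω ∂μ = x ⬝ᵥ fun i => ∫ ω, X ω i ∂μ := by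
  simp only [dotProduct]
  rw [integral_finsetSum _ fun i _ => (hX i).const_mul (x i)]
  simp only [integral_const_mul]

lemma variance_dotProduct [IsFiniteMeasure μ] {X : Ω → ι → ℝ}
    (hX : ∀ i, MemLp (fun ω => X ω i) 2 μ) (x : ι → ℝ) :
    Var[fun ω => x ⬝ᵥ X ω; μ] = x ⬝ᵥ covMatrix X μ *ᵥ x := by
  have hxX : ∀ i, MemLp (fun ω => x i * X ω i) 2 μ := fun i => (hX i).const_mul (x i)
  rw [← covariance_self (memLp_dotProduct hX x).aemeasurable]
  change cov[fun ω => ∑ i, x i * X ω i, fun ω => ∑ j, x j * X ω j; μ] = _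
  simp only [covariance_fun_sum_fun_sum hxX hxX, covariance_const_mul_left,
    covariance_const_mul_right, covMatrix, dotProduct, mulVec, of_apply, Finset.mul_sum]
  refine Finset.sum_congr rfl fun i _ => Finset.sum_congr rfl fun j _ => by ring

lemma integral_sq_add_sub_dotProduct [IsProbabilityMeasure μ] {w : Ω → ℝ}
    (hw : MemLp w 2 μ) (hw0 : μ[w] = 0) {θ x : ι → ℝ} {θhat : Ω → ι → ℝ}
    (hθhat : ∀ i, MemLp (fun ω => θhat ω i) 2 μ) (hunbiased : ∀ i, ∫ ω, θhat ω i ∂μ = θ i)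
    (hindep : IndepFun w θhat μ) :
    ∫ ω, (x ⬝ᵥ θ + w ω - x ⬝ᵥ θhat ω) ^ 2 ∂μ = Var[w; μ] + x ⬝ᵥ covMatrix θhat μ *ᵥ x := by
  have hpred := memLp_dotProduct hθhat x
  have hres : MemLp (fun ω => x ⬝ᵥ θ - x ⬝ᵥ θhat ω) 2 μ := (memLp_const _).sub hpred
  have hpred_mean : ∫ ω, x ⬝ᵥ θhat ω ∂μ = x ⬝ᵥ θ := by
    rw [integral_dotProduct (fun i => (hθhat i).integrable one_le_two), funext hunbiased]
  have hmean : ∫ ω, (w ω + (x ⬝ᵥ θ - x ⬝ᵥ θhat ω)) ∂μ = 0 := by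
    rw [integral_add (hw.integrable one_le_two) (hres.integrable one_le_two),
      integral_sub (integrable_const _) (hpred.integrable one_le_two), hpred_mean]
    simp [hw0]
  have hindep' : IndepFun w (fun ω => x ⬝ᵥ θ - x ⬝ᵥ θhat ω) μ :=
    hindep.comp (φ := id) (ψ := fun v => x ⬝ᵥ θ - x ⬝ᵥ v) measurable_id (by fun_prop)
  calc ∫ ω, (x ⬝ᵥ θ + w ω - x ⬝ᵥ θhat ω) ^ 2 ∂μ
      = ∫ ω, (w ω + (x ⬝ᵥ θ - x ⬝ᵥ θhat ω)) ^ 2 ∂μ := by congr 1 with ω; ring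
    _ = Var[fun ω => w ω + (x ⬝ᵥ θ - x ⬝ᵥ θhat ω); μ] :=
      (variance_of_integral_eq_zero (hw.add hres).aemeasurable hmean).symm
    _ = Var[w; μ] + x ⬝ᵥ covMatrix θhat μ *ᵥ x := by
      rw [hindep'.variance_fun_add hw hres, variance_const_sub hpred.aestronglyMeasurable,
        variance_dotProduct hθhat]

end ProbabilityTheory

theorem stmt12_general {Ω : Type*} [MeasurableSpace Ω] (μ : Measure Ω) [IsProbabilityMeasure μ]
    (dS dT nS nT : ℕ)
    (xS : Matrix (Fin nS) (Fin dS) ℝ) (xT : Matrix (Fin nT) (Fin dT) ℝ)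
    (hxT : Function.Injective xT.mulVec)
    (σ σS : ℝ) (hσ : 0 < σ)
    (θ x : Fin dT → ℝ)
    (w : Ω → ℝ) (hw2 : MemLp w 2 μ)
    (hwmean : ∫ ω, w ω ∂μ = 0)
    (θhatT θhatα : Ω → Fin dT → ℝ)
    (hθhatT2 : ∀ i, MemLp (fun ω => θhatT ω i) 2 μ)
    (hθhatα2 : ∀ i, MemLp (fun ω => θhatα ω i) 2 μ)
    (hindepT : IndepFun w θhatT μ)
    (hindepα : IndepFun w θhatα μ)
    (hunbiasedT : ∀ i, ∫ ω, θhatT ω i ∂μ = θ i)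
    (hunbiasedα : ∀ i, ∫ ω, θhatα ω i ∂μ = θ i)
    (hVarT : ∀ i j,
      ∫ ω, (θhatT ω i - ∫ ω', θhatT ω' i ∂μ) * (θhatT ω j - ∫ ω', θhatT ω' j ∂μ) ∂μ =
        (σ ^ 2 • (xTᵀ * xT)⁻¹) i j)
    (hVarα : ∀ i j,
      ∫ ω, (θhatα ω i - ∫ ω', θhatα ω' i ∂μ) * (θhatα ω j - ∫ ω', θhatα ω' j ∂μ) ∂μ =
        (((σS ^ 2)⁻¹ • (emb dS dT * (xSᵀ * xS) * (emb dS dT)ᵀ) +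
          (σ ^ 2)⁻¹ • (xTᵀ * xT))⁻¹) i j) :
    ∫ ω, (x ⬝ᵥ θ + w ω - x ⬝ᵥ θhatα ω) ^ 2 ∂μ ≤
      ∫ ω, (x ⬝ᵥ θ + w ω - x ⬝ᵥ θhatT ω) ^ 2 ∂μ := by
  have hGramT : (xTᵀ * xT).PosDef := by simpa using PosDef.conjTranspose_mul_self xT hxT
  have hGramS : (emb dS dT * (xSᵀ * xS) * (emb dS dT)ᵀ).PosSemidef := by
    simpa using (posSemidef_conjTranspose_mul_self xS).mul_mul_conjTranspose_same (emb dS dT)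
  have hinvT : ((σ ^ 2)⁻¹ • (xTᵀ * xT))⁻¹ = σ ^ 2 • (xTᵀ * xT)⁻¹ := inv_eq_left_inv <| by
    simp [smul_smul, hσ.ne', nonsing_inv_mul _ ((isUnit_iff_isUnit_det _).mp hGramT.isUnit)]
  have hcovT : covMatrix θhatT μ = ((σ ^ 2)⁻¹ • (xTᵀ * xT))⁻¹ := hinvT ▸ ext hVarT
  have hcovα : covMatrix θhatα μ = ((σS ^ 2)⁻¹ • (emb dS dT * (xSᵀ * xS) * (emb dS dT)ᵀ) +
      (σ ^ 2)⁻¹ • (xTᵀ * xT))⁻¹ := ext hVarα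
  rw [integral_sq_add_sub_dotProduct hw2 hwmean hθhatα2 hunbiasedα hindepα,
    integral_sq_add_sub_dotProduct hw2 hwmean hθhatT2 hunbiasedT hindepT, hcovα, hcovT]
  gcongr
  exact dotProduct_inv_add_mulVec_le (hGramS.smul (by positivity)) (hGramT.smul (by positivity)) x

/-- Theorem 1 of the paper: if `Y = x·θ + w` with `𝔼[w] = 0`, `Var(w) = σ²`, and
`θ̂_T`, `θ̂_α` are unbiased estimators of `θ`, each independent of `w`, with covariance
matrices `σ² Σ_T⁻¹` and `((1/σ_S²) 𝕀 Σ_S 𝕀ᵀ + (1/σ²) Σ_T)⁻¹` respectively, then the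
generalization error of `θ̂_α` is bounded by that of `θ̂_T`. -/
theorem stmt12 {Ω : Type*} [MeasurableSpace Ω] (μ : Measure Ω) [IsProbabilityMeasure μ]
    (dS dT nS nT : ℕ) (hd : dS < dT)
    (xS : Matrix (Fin nS) (Fin dS) ℝ) (xT : Matrix (Fin nT) (Fin dT) ℝ)
    (hxS : Function.Injective xS.mulVec)
    (hxT : Function.Injective xT.mulVec)
    (σ σS : ℝ) (hσ : 0 < σ) (hσS : 0 < σS)
    (θ x : Fin dT → ℝ)
    (w : Ω → ℝ) (hw2 : MemLp w 2 μ)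
    (hwmean : ∫ ω, w ω ∂μ = 0)
    (hwvar : ∫ ω, (w ω - ∫ ω', w ω' ∂μ) ^ 2 ∂μ = σ ^ 2)
    (θhatT θhatα : Ω → Fin dT → ℝ)
    (hθhatT2 : ∀ i, MemLp (fun ω => θhatT ω i) 2 μ)
    (hθhatα2 : ∀ i, MemLp (fun ω => θhatα ω i) 2 μ)
    (hindepT : IndepFun w θhatT μ)
    (hindepα : IndepFun w θhatα μ)
    (hunbiasedT : ∀ i, ∫ ω, θhatT ω i ∂μ = θ i)
    (hunbiasedα : ∀ i, ∫ ω, θhatα ω i ∂μ = θ i)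
    (hVarT : ∀ i j,
      ∫ ω, (θhatT ω i - ∫ ω', θhatT ω' i ∂μ) * (θhatT ω j - ∫ ω', θhatT ω' j ∂μ) ∂μ =
        (σ ^ 2 • (xTᵀ * xT)⁻¹) i j)
    (hVarα : ∀ i j,
      ∫ ω, (θhatα ω i - ∫ ω', θhatα ω' i ∂μ) * (θhatα ω j - ∫ ω', θhatα ω' j ∂μ) ∂μ =
        (((σS ^ 2)⁻¹ • (emb dS dT * (xSᵀ * xS) * (emb dS dT)ᵀ) +
          (σ ^ 2)⁻¹ • (xTᵀ * xT))⁻¹) i j) :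
    ∫ ω, (x ⬝ᵥ θ + w ω - x ⬝ᵥ θhatα ω) ^ 2 ∂μ ≤
      ∫ ω, (x ⬝ᵥ θ + w ω - x ⬝ᵥ θhatT ω) ^ 2 ∂μ :=
  stmt12_general μ dS dT nS nT xS xT hxT σ σS hσ θ x w hw2 hwmean θhatT θhatα hθhatT2 hθhatα2
    hindepT hindepα hunbiasedT hunbiasedα hVarT hVarα
end
end

section
/- Suppose Σ_S = I_{d_S} and Σ_T = I_{d_T}, take weights α_S = 1/σ_S², α_T = 1/σ² with σ, σ_S > 0, and let M = (1/σ_S²) 𝕀 𝕀ᵀ + (1/σ²) I_{d_T}. If the row vector x ∈ ℝ^{d_T} satisfies x_i ≠ 0 for some index i ≤ d_S, then the transfer gain is strictly positive: x (σ² I_{d_T} − M⁻¹) xᵀ > 0. -/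
/-!
`M` is diagonal, with entry `σS⁻² + σ⁻²` at the first `dS` coordinates and `σ⁻²` elsewhere.
Hence `σ² I − M⁻¹` is diagonal with entries `σ² − (a + σ⁻²)⁻¹ ≥ 0`, strictly positive where
`a = σS⁻² > 0`, and the quadratic form is positive as soon as `x` charges one of those coordinates.
-/

open Matrix

noncomputable section

lemma emb_mul_transpose (dS dT : ℕ) :
    emb dS dT * (emb dS dT)ᵀ = diagonal fun j : Fin dT => if (j : ℕ) < dS then 1 else 0 := by
  ext i j
  simp only [mul_apply, emb, transpose_apply, of_apply, mul_ite, mul_one, mul_zero,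
    diagonal_apply]
  rw [Fin.sum_univ_eq_sum_range
    (fun k => if (j : ℕ) = k then if (i : ℕ) = k then 1 else 0 else 0), Finset.sum_ite_eq]
  grind

namespace Matrix

variable {n K : Type*} [Fintype n] [DecidableEq n] [Field K]

lemma inv_diagonal_of_ne_zero {d : n → K} (hd : ∀ j, d j ≠ 0) :
    (diagonal d)⁻¹ = diagonal fun j => (d j)⁻¹ := by
  refine inv_eq_right_inv ?_
  rw [diagonal_mul_diagonal, ← diagonal_one]
  exact congrArg diagonal (funext fun j => mul_inv_cancel₀ (hd j))

lemma dotProduct_diagonal_mulVec_self (w x : n → K) :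
    x ⬝ᵥ diagonal w *ᵥ x = ∑ j, w j * x j ^ 2 := by
  simp only [dotProduct, mulVec_diagonal]
  exact Finset.sum_congr rfl fun j _ => by ring

lemma dotProduct_diagonal_mulVec_self_pos [LinearOrder K] [IsStrictOrderedRing K]
    {w : n → K} (hw : ∀ j, 0 ≤ w j) {x : n → K} {i : n} (hwi : 0 < w i) (hxi : x i ≠ 0) :
    0 < x ⬝ᵥ diagonal w *ᵥ x := by
  rw [dotProduct_diagonal_mulVec_self]
  exact Finset.sum_pos' (fun j _ => mul_nonneg (hw j) (sq_nonneg _))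
    ⟨i, Finset.mem_univ i, mul_pos hwi (by positivity)⟩

end Matrix

lemma sub_inv_add_inv_nonneg {K : Type*} [Field K] [LinearOrder K] [IsStrictOrderedRing K]
    {s a : K} (hs : 0 < s) (ha : 0 ≤ a) : 0 ≤ s - (a + s⁻¹)⁻¹ := by
  have := inv_anti₀ (inv_pos.mpr hs) (le_add_of_nonneg_left ha)
  rw [inv_inv] at this
  linarith

lemma sub_inv_add_inv_pos {K : Type*} [Field K] [LinearOrder K] [IsStrictOrderedRing K]
    {s a : K} (hs : 0 < s) (ha : 0 < a) : 0 < s - (a + s⁻¹)⁻¹ := by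
  have := inv_strictAnti₀ (inv_pos.mpr hs) (lt_add_of_pos_left _ ha)
  rw [inv_inv] at this
  linarith

theorem stmt14_general (dS dT : ℕ)
    (σ σS : ℝ) (hσ : 0 < σ) (hσS : 0 < σS)
    (x : Fin dT → ℝ) (i : Fin dT) (hi : (i : ℕ) < dS) (hxi : x i ≠ 0) :
    let M := (σS ^ 2)⁻¹ • (emb dS dT * (emb dS dT)ᵀ) +
      (σ ^ 2)⁻¹ • (1 : Matrix (Fin dT) (Fin dT) ℝ)
    0 < x ⬝ᵥ (σ ^ 2 • (1 : Matrix (Fin dT) (Fin dT) ℝ) - M⁻¹).mulVec x := by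
  intro M
  set d : Fin dT → ℝ := fun j => (σS ^ 2)⁻¹ * (if (j : ℕ) < dS then 1 else 0) + (σ ^ 2)⁻¹
  have hM : M = diagonal d := by
    simp only [M, emb_mul_transpose, ← diagonal_one, ← diagonal_smul, diagonal_add]
    congr 1
    funext j
    simp [d]
  have hd : ∀ j, d j ≠ 0 := fun j => by positivity
  have hgain : σ ^ 2 • (1 : Matrix (Fin dT) (Fin dT) ℝ) - M⁻¹ =
      diagonal fun j => σ ^ 2 - (d j)⁻¹ := by
    rw [hM, inv_diagonal_of_ne_zero hd, ← diagonal_one, ← diagonal_smul, diagonal_sub]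
    simp only [Pi.smul_apply, smul_eq_mul, mul_one]
  rw [hgain]
  refine dotProduct_diagonal_mulVec_self_pos (fun j => ?_) (i := i) ?_ hxi
  · exact sub_inv_add_inv_nonneg (by positivity) (by positivity)
  · exact sub_inv_add_inv_pos (by positivity) (by rw [if_pos hi, mul_one]; positivity)

/-- With `Σ_S = I`, `Σ_T = I`, weights `α_S = 1/σ_S²`, `α_T = 1/σ²`, and
`M = (1/σ_S²) 𝕀 𝕀ᵀ + (1/σ²) I`, if the row vector `x` has `x_i ≠ 0` for some
index `i ≤ d_S`, then the transfer gain `x (σ² I − M⁻¹) xᵀ` is strictly positive. -/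
theorem stmt14 (dS dT : ℕ) (hd : dS < dT)
    (σ σS : ℝ) (hσ : 0 < σ) (hσS : 0 < σS)
    (x : Fin dT → ℝ) (i : Fin dT) (hi : (i : ℕ) < dS) (hxi : x i ≠ 0) :
    let M := (σS ^ 2)⁻¹ • (emb dS dT * (emb dS dT)ᵀ) +
      (σ ^ 2)⁻¹ • (1 : Matrix (Fin dT) (Fin dT) ℝ)
    0 < x ⬝ᵥ (σ ^ 2 • (1 : Matrix (Fin dT) (Fin dT) ℝ) - M⁻¹).mulVec x :=
  stmt14_general dS dT σ σS hσ hσS x i hi hxi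
end
end
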